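/- arXiv:1208.3139 — 2 statements merged into one kernel-verified Lean document; each statement's English description precedes it below -/
import Mathlib

section
/- Let S = ℂ[x₀,…,xₙ] and let 0 → A → B → C → 0 be a short exact sequence of finitely generated graded S-modules where A is a Koszul (linear) module and C is semisimple concentrated in a single degree m ≥ 0. Then the sequence splits. -/
noncomputable section

open DirectSum

/-- A `ℤ`-graded module over a `ℂ`-algebra `A` graded by `𝒜 : ℕ → Submodule ℂ A`,
with all structure maps compatible with the gradings. -/
structure GrMod {A : Type} [Ring A] [Algebra ℂ A] (𝒜 : ℕ → Submodule ℂ A) where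
  M : Type
  [acg : AddCommGroup M]
  [modA : Module A M]
  [modC : Module ℂ M]
  [tower : IsScalarTower ℂ A M]
  gr : ℤ → Submodule ℂ M
  decomp : DirectSum.IsInternal gr
  smul_mem' : ∀ (d : ℕ) (i : ℤ) (s : A), s ∈ 𝒜 d → ∀ m ∈ gr i, s • m ∈ gr (i + d)

attribute [instance] GrMod.acg GrMod.modA GrMod.modC GrMod.tower

variable {A : Type} [Ring A] [Algebra ℂ A] {𝒜 : ℕ → Submodule ℂ A}

/-- Degree-zero graded homomorphisms between graded modules. -/
@[ext] structure GrHom (X Y : GrMod 𝒜) where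
  toFun : X.M →ₗ[A] Y.M
  map_gr : ∀ i, ∀ m ∈ X.gr i, toFun m ∈ Y.gr i

namespace GrHom

def comp {X Y Z : GrMod 𝒜} (g : GrHom Y Z) (f : GrHom X Y) : GrHom X Z :=
  ⟨g.toFun ∘ₗ f.toFun, fun i m hm => g.map_gr i _ (f.map_gr i m hm)⟩

def id (X : GrMod 𝒜) : GrHom X X := ⟨LinearMap.id, fun _ _ hm => hm⟩

def zero (X Y : GrMod 𝒜) : GrHom X Y := ⟨0, fun i _ _ => (Y.gr i).zero_mem⟩

def sub {X Y : GrMod 𝒜} (f g : GrHom X Y) : GrHom X Y :=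
  ⟨f.toFun - g.toFun, fun i m hm => by
    simpa using sub_mem (f.map_gr i m hm) (g.map_gr i m hm)⟩

end GrHom

/-- `0 → X → Y → Z → 0` is a short exact sequence of graded modules. -/
structure IsSES {X Y Z : GrMod 𝒜} (f : GrHom X Y) (g : GrHom Y Z) : Prop where
  inj : Function.Injective f.toFun
  surj : Function.Surjective g.toFun
  exact : LinearMap.range f.toFun = LinearMap.ker g.toFun

/-- A short exact sequence of graded modules splits (via a degree-zero retraction). -/
def Splits {X Y Z : GrMod 𝒜} (f : GrHom X Y) (g : GrHom Y Z) : Prop :=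
  ∃ r : GrHom Y X, r.comp f = GrHom.id X

/-- Vanishing of the degree-zero part of `Ext¹(Z, X)`:
every short exact sequence `0 → X → Y → Z → 0` of graded modules splits. -/
def Ext1Zero (Z X : GrMod 𝒜) : Prop :=
  ∀ (Y : GrMod 𝒜) (f : GrHom X Y) (g : GrHom Y Z), IsSES f g → Splits f g

/-- A graded free module all of whose basis elements lie in degree `d`. -/
def IsFreeGenInDegree (P : GrMod 𝒜) (d : ℤ) : Prop :=
  ∃ (ι : Type) (b : Module.Basis ι A P.M), ∀ j, b j ∈ P.gr d

/-- A graded free module (a free module with a homogeneous basis). -/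
def IsGradedFree (P : GrMod 𝒜) : Prop :=
  ∃ (ι : Type) (b : Module.Basis ι A P.M) (d : ι → ℤ), ∀ j, b j ∈ P.gr (d j)

/-- `X` has a linear presentation: a graded free presentation `P₁ → P₀ → X → 0`
with `P₀` generated in degree `0` and `P₁` generated in degree `1`. -/
def HasLinearPresentation (X : GrMod 𝒜) : Prop :=
  ∃ (P₁ P₀ : GrMod 𝒜) (f : GrHom P₁ P₀) (p : GrHom P₀ X),
    IsFreeGenInDegree P₁ 1 ∧ IsFreeGenInDegree P₀ 0 ∧
    Function.Surjective p.toFun ∧ LinearMap.range f.toFun = LinearMap.ker p.toFun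

/-- `X` is a linear (Koszul) module: it has a graded free resolution whose `k`-th
term is generated in degree `k`. -/
def IsLinearModule (X : GrMod 𝒜) : Prop :=
  ∃ (P : ℕ → GrMod 𝒜) (d : ∀ k, GrHom (P (k+1)) (P k)) (p : GrHom (P 0) X),
    (∀ k, IsFreeGenInDegree (P k) (k : ℤ)) ∧
    Function.Surjective p.toFun ∧
    LinearMap.range (d 0).toFun = LinearMap.ker p.toFun ∧
    ∀ k, LinearMap.range (d (k+1)).toFun = LinearMap.ker (d k).toFun

/-- `Y` is the graded shift `X(i)` of `X`, i.e. `Y_k = X_{k+i}`. -/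
def IsGradedShiftOf (Y X : GrMod 𝒜) (i : ℤ) : Prop :=
  ∃ e : Y.M ≃ₗ[A] X.M,
    (∀ k, ∀ m ∈ Y.gr k, e m ∈ X.gr (k + i)) ∧
    (∀ k, ∀ m ∈ X.gr (k + i), e.symm m ∈ Y.gr k)

/-- `ι : T → X` realizes `T` as the truncation `X_{≥ i}` of `X`. -/
structure IsTruncation (X T : GrMod 𝒜) (i : ℤ) (ι : GrHom T X) : Prop where
  inj : Function.Injective ι.toFun
  low : ∀ k, k < i → T.gr k = ⊥
  onto : ∀ k, i ≤ k → ∀ m ∈ X.gr k, ∃ t ∈ T.gr k, ι.toFun t = m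

/-- `C` is a semisimple graded module concentrated in the single degree `m`. -/
def IsSemisimpleInDegree (C : GrMod 𝒜) (m : ℤ) : Prop :=
  (∀ k, k ≠ m → C.gr k = ⊥) ∧
  ∀ (d : ℕ), 1 ≤ d → ∀ s ∈ 𝒜 d, ∀ x : C.M, s • x = 0

/-- A graded submodule of a graded module. -/
def IsGradedSubmodule (X : GrMod 𝒜) (U : Submodule A X.M) : Prop :=
  U.restrictScalars ℂ = ⨆ i, (U.restrictScalars ℂ ⊓ X.gr i)

/-- Indecomposability of a graded module. -/
def GrIndecomposable (X : GrMod 𝒜) : Prop :=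
  (∃ x : X.M, x ≠ 0) ∧
  ∀ U V : Submodule A X.M, IsGradedSubmodule X U → IsGradedSubmodule X V →
    IsCompl U V → U = ⊥ ∨ V = ⊥

/-- A graded isomorphism. -/
def IsGrIso {X Y : GrMod 𝒜} (f : GrHom X Y) : Prop :=
  Function.Bijective f.toFun ∧ ∀ i, ∀ m ∈ Y.gr i, ∃ x ∈ X.gr i, f.toFun x = m

/-- `Z` is a (first) syzygy of `B`: there is a short exact sequence `0 → Z → P → B → 0`
with `P` graded free. -/
def IsSyzygyOf (Z B : GrMod 𝒜) : Prop :=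
  ∃ (P : GrMod 𝒜) (j : GrHom Z P) (p : GrHom P B), IsGradedFree P ∧ IsSES j p

/-- `Z` is a `k`-th syzygy of `B`. -/
def IsIterSyzygyOf : ℕ → GrMod 𝒜 → GrMod 𝒜 → Prop
  | 0, Z, B => ∃ f : GrHom Z B, IsGrIso f
  | (k+1), Z, B => ∃ W : GrMod 𝒜, IsSyzygyOf Z W ∧ IsIterSyzygyOf k W B

/-- A degree-zero map factors through a graded free module, i.e. it vanishes in the
stable category of graded modules. -/
def FactorsThroughFree {X Y : GrMod 𝒜} (f : GrHom X Y) : Prop :=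
  ∃ (F : GrMod 𝒜) (g : GrHom X F) (h : GrHom F Y), IsGradedFree F ∧ h.comp g = f

/-- The polynomial ring `S = ℂ[x₀, …, xₙ]`. -/
abbrev PolyRing (n : ℕ) := MvPolynomial (Fin (n+1)) ℂ

/-- The standard grading of the polynomial ring. -/
abbrev polyGrading (n : ℕ) : ℕ → Submodule ℂ (PolyRing n) :=
  fun d => MvPolynomial.homogeneousSubmodule (Fin (n+1)) ℂ d

/-- The exterior algebra `R = Λ(x₀, …, xₙ)` over `ℂ`. -/
abbrev ExtAlg (n : ℕ) := ExteriorAlgebra ℂ (Fin (n+1) → ℂ)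

/-- The standard grading of the exterior algebra. -/
abbrev extGrading (n : ℕ) : ℕ → Submodule ℂ (ExtAlg n) :=
  fun d => LinearMap.range (ExteriorAlgebra.ι ℂ :
    (Fin (n+1) → ℂ) →ₗ[ℂ] ExtAlg n) ^ d

end

/-!
Splitting amounts to a graded section of `g`, and since `C` is semisimple in degree `m` it
suffices to lift every element of `C` to an element of `B_m` killed by all variables. For any
lift `b`, the elements `xᵢ b ∈ A_{m+1}` form a Koszul 1-cocycle of `A`, and `b` can be corrected
exactly when this cocycle is a coboundary. For a linear module `A` this vanishing of Koszul
cohomology comes from its linear resolution `P_•`: each `P_j` is free on generators of degree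
`j`, so its Koszul cochains of internal degree above `j` are contracted by the homotopy
`∑ dxᵢ ⊗ ∂/∂xᵢ` (Euler's identity), and a diagram chase through the resolution, by downward
induction on `j` (trivial beyond the number of variables), carries this acyclicity over to `A`.
-/

open MvPolynomial Finset

namespace GrMod

variable {R : Type} [Ring R] [Algebra ℂ R] {𝒜 : ℕ → Submodule ℂ R}

noncomputable def proj (X : GrMod 𝒜) (i : ℤ) : X.M →ₗ[ℂ] X.M :=
  (X.gr i).subtype ∘ₗ DirectSum.component ℂ ℤ (fun i => X.gr i) i ∘ₗ
    (LinearEquiv.ofBijective (DirectSum.coeLinearMap X.gr) X.decomp).symm.toLinearMap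

variable (X : GrMod 𝒜)

lemma proj_mem (i : ℤ) (x : X.M) : X.proj i x ∈ X.gr i :=
  Submodule.coe_mem _

lemma proj_of_mem {i : ℤ} {x : X.M} (hx : x ∈ X.gr i) : X.proj i x = x := by
  change ((LinearEquiv.ofBijective (DirectSum.coeLinearMap X.gr) X.decomp).symm x i : X.M) = x
  rw [X.decomp.ofBijective_coeLinearMap_of_mem hx]

lemma proj_of_mem_ne {i j : ℤ} {x : X.M} (hx : x ∈ X.gr i) (hij : i ≠ j) :
    X.proj j x = 0 := by
  change ((LinearEquiv.ofBijective (DirectSum.coeLinearMap X.gr) X.decomp).symm x j : X.M) = 0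
  rw [X.decomp.ofBijective_coeLinearMap_of_mem_ne hij hx, ZeroMemClass.coe_zero]

lemma iSup_gr_eq_top : ⨆ i, X.gr i = ⊤ :=
  X.decomp.submodule_iSup_eq_top

lemma mem_gr_of_forall_ne_eq_bot {m : ℤ} (h : ∀ k, k ≠ m → X.gr k = ⊥) (x : X.M) :
    x ∈ X.gr m := by
  have : ⨆ i, X.gr i ≤ X.gr m := iSup_le fun k => by
    rcases eq_or_ne k m with rfl | hk
    · exact le_rfl
    · simp [h k hk]
  exact this (X.iSup_gr_eq_top ▸ Submodule.mem_top)

end GrMod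

namespace GrHom

variable {R : Type} [Ring R] [Algebra ℂ R] {𝒜 : ℕ → Submodule ℂ R} {X Y : GrMod 𝒜}

lemma map_proj (φ : GrHom X Y) (i : ℤ) (x : X.M) :
    φ.toFun (X.proj i x) = Y.proj i (φ.toFun x) := by
  have hx : x ∈ ⨆ k, X.gr k := X.iSup_gr_eq_top ▸ Submodule.mem_top
  induction hx using Submodule.iSup_induction' with
  | mem k x hx =>
    rcases eq_or_ne k i with rfl | hki
    · rw [X.proj_of_mem hx, Y.proj_of_mem (φ.map_gr k x hx)]
    · rw [X.proj_of_mem_ne hx hki, Y.proj_of_mem_ne (φ.map_gr k x hx) hki, map_zero]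
  | zero => simp
  | add x y _ _ hx hy => simp [hx, hy]

lemma exists_mem_gr_of_mem_range (φ : GrHom X Y) {i : ℤ} {y : Y.M} (hy : y ∈ Y.gr i)
    (hr : y ∈ LinearMap.range φ.toFun) : ∃ x ∈ X.gr i, φ.toFun x = y := by
  obtain ⟨x, rfl⟩ := hr
  exact ⟨X.proj i x, X.proj_mem i x, by rw [map_proj, Y.proj_of_mem hy]⟩

lemma mem_gr_of_map_mem (φ : GrHom X Y) (hφ : Function.Injective φ.toFun) {i : ℤ} {x : X.M}
    (hx : φ.toFun x ∈ Y.gr i) : x ∈ X.gr i := by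
  rw [← hφ (by rw [map_proj, Y.proj_of_mem hx] : φ.toFun (X.proj i x) = φ.toFun x)]
  exact X.proj_mem i x

end GrHom

section Splitting

variable {R : Type} [Ring R] [Algebra ℂ R] {𝒜 : ℕ → Submodule ℂ R} {X Y Z : GrMod 𝒜}
  {f : GrHom X Y} {g : GrHom Y Z}

lemma IsSES.map_map_eq_zero (h : IsSES f g) (x : X.M) : g.toFun (f.toFun x) = 0 := by
  rw [← LinearMap.mem_ker, ← h.exact]
  exact LinearMap.mem_range_self _ x

/-- The retraction is `y ↦ f⁻¹ (y - s (g y))`. -/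
theorem IsSES.splits_of_section (h : IsSES f g) (s : GrHom Z Y)
    (hs : ∀ z, g.toFun (s.toFun z) = z) : Splits f g := by
  set φ : Y.M →ₗ[R] Y.M := LinearMap.id - s.toFun ∘ₗ g.toFun
  have hφ : ∀ y, φ y ∈ LinearMap.range f.toFun := fun y => by
    simp [φ, h.exact, hs]
  set r : Y.M →ₗ[R] X.M :=
    (LinearEquiv.ofInjective f.toFun h.inj).symm.toLinearMap ∘ₗ φ.codRestrict _ hφ
  have hfr : ∀ y, f.toFun (r y) = y - s.toFun (g.toFun y) := fun y => by
    simp [r, φ]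
  refine ⟨⟨r, fun i y hy => f.mem_gr_of_map_mem h.inj ?_⟩, ?_⟩
  · rw [hfr]
    exact sub_mem hy (s.map_gr i _ (g.map_gr i y hy))
  · ext x
    exact h.inj (by simp [GrHom.comp, GrHom.id, hfr, h.map_map_eq_zero])

end Splitting

lemma MvPolynomial.smul_eq_constantCoeff_smul {σ R M : Type*} [CommSemiring R]
    [AddCommMonoid M] [Module (MvPolynomial σ R) M] [Module R M]
    [IsScalarTower R (MvPolynomial σ R) M] {x : M}
    (hx : ∀ i, (X i : MvPolynomial σ R) • x = 0) (p : MvPolynomial σ R) :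
    p • x = constantCoeff p • x := by
  induction p using MvPolynomial.induction_on with
  | C a => rw [constantCoeff_C, ← algebraMap_eq, algebraMap_smul]
  | add p q hp hq => rw [add_smul, hp, hq, map_add, add_smul]
  | mul_X p i _ => simp [mul_smul, hx]

lemma X_mem_polyGrading {n : ℕ} (i : Fin (n+1)) : (X i : PolyRing n) ∈ polyGrading n 1 :=
  (mem_homogeneousSubmodule _ _).2 (isHomogeneous_X ℂ i)

section GradedSection

variable {n : ℕ} {B C : GrMod (polyGrading n)}

lemma IsSemisimpleInDegree.X_smul {m : ℤ} (hC : IsSemisimpleInDegree C m) (i : Fin (n+1))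
    (c : C.M) : (X i : PolyRing n) • c = 0 :=
  hC.2 1 le_rfl _ (X_mem_polyGrading i) c

/-- The lifts of `C` that sit in degree `m` and are killed by all variables form a
`ℂ`-subspace of `B` on which the polynomial ring acts through constant terms, so any
`ℂ`-linear choice of such lifts is already a graded module map. -/
theorem exists_section_of_forall_lift {m : ℤ} (hC : IsSemisimpleInDegree C m) (g : GrHom B C)
    (hlift : ∀ c : C.M, ∃ b ∈ B.gr m, g.toFun b = c ∧ ∀ i, (X i : PolyRing n) • b = 0) :
    ∃ s : GrHom C B, ∀ c, g.toFun (s.toFun c) = c := by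
  set K : Submodule ℂ B.M := B.gr m ⊓
    ⨅ i, LinearMap.ker ((LinearMap.lsmul (PolyRing n) B.M (X i)).restrictScalars ℂ)
  have hK : ∀ b : K, (b : B.M) ∈ B.gr m ∧ ∀ i, (X i : PolyRing n) • (b : B.M) = 0 :=
    fun b => by simpa [K] using b.2
  choose lift hlift_mem hlift_g hlift_X using hlift
  set bC := Module.Basis.ofVectorSpace ℂ C.M
  set σ' : C.M →ₗ[ℂ] K :=
    bC.constr ℂ fun t => ⟨lift (bC t), by simpa [K] using ⟨hlift_mem _, hlift_X _⟩⟩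
  have hgσ' : ∀ c, g.toFun (σ' c : B.M) = c := by
    suffices (g.toFun.restrictScalars ℂ ∘ₗ K.subtype ∘ₗ σ') = LinearMap.id from
      fun c => LinearMap.congr_fun this c
    exact bC.ext fun t => by simp [σ', hlift_g]
  have hσ'_smul : ∀ (p : PolyRing n) c, (σ' (p • c) : B.M) = p • (σ' c : B.M) := fun p c => by
    rw [smul_eq_constantCoeff_smul (hC.X_smul · c), map_smul, Submodule.coe_smul,
      smul_eq_constantCoeff_smul (hK (σ' c)).2]
  refine ⟨⟨⟨⟨fun c => σ' c, fun c c' => by simp⟩, hσ'_smul⟩, fun k c hc => ?_⟩, hgσ'⟩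
  rcases eq_or_ne k m with rfl | hk
  · exact (hK (σ' c)).1
  · rw [hC.1 k hk, Submodule.mem_bot] at hc
    simp [hc]

end GradedSection

section KoszulSign

variable {σ : Type*} [LinearOrder σ]

def koszulSign (i : σ) (T : Finset σ) : ℤ := (-1) ^ #{j ∈ T | j < i}

lemma koszulSign_mul_self (i : σ) (T : Finset σ) : koszulSign i T * koszulSign i T = 1 := by
  rw [koszulSign, ← pow_add, ← two_mul, pow_mul, neg_one_sq, one_pow]

lemma koszulSign_singleton (i : σ) : koszulSign i {i} = 1 := by
  rw [koszulSign, filter_singleton, if_neg (lt_irrefl i), card_empty, pow_zero]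

lemma koszulSign_erase_of_le {i j : σ} (h : j ≤ i) (T : Finset σ) :
    koszulSign j (T.erase i) = koszulSign j T := by
  rw [koszulSign, filter_erase, erase_eq_of_notMem (by simp [h]), koszulSign]

lemma koszulSign_erase_of_lt {i j : σ} (h : j < i) {T : Finset σ} (hj : j ∈ T) :
    koszulSign i (T.erase j) = -koszulSign i T := by
  have hmem : j ∈ {x ∈ T | x < i} := mem_filter.2 ⟨hj, h⟩
  rw [koszulSign, koszulSign, filter_erase, ← card_erase_add_one hmem, pow_succ]
  ring

lemma koszulSign_erase_mul_koszulSign_erase {U : Finset σ} {i j : σ} (hi : i ∈ U) (hj : j ∈ U)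
    (hij : i ≠ j) :
    koszulSign i (U.erase j) * koszulSign j (U.erase i) = -(koszulSign i U * koszulSign j U) := by
  rcases hij.lt_or_gt with h | h
  · rw [koszulSign_erase_of_le h.le, koszulSign_erase_of_lt h hi]
    ring
  · rw [koszulSign_erase_of_lt h hj, koszulSign_erase_of_le h.le]
    ring

lemma koszulSign_mul_koszulSign_erase {T : Finset σ} {i j : σ} (hi : i ∈ T) (hj : j ∈ T)
    (hij : i ≠ j) :
    koszulSign j T * koszulSign i (T.erase j) = -(koszulSign i T * koszulSign j (T.erase i)) := by
  rcases hij.lt_or_gt with h | h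
  · rw [koszulSign_erase_of_le h.le, koszulSign_erase_of_lt h hi]
    ring
  · rw [koszulSign_erase_of_lt h hj, koszulSign_erase_of_le h.le]
    ring

end KoszulSign

section KoszulDifferential

variable {σ R M N : Type*} [LinearOrder σ] [CommSemiring R]
  [AddCommGroup M] [Module (MvPolynomial σ R) M] [AddCommGroup N] [Module (MvPolynomial σ R) N]

variable (R) in
/-- Cochains are functions on all subsets of the variables; the statements below only constrain
them on the subsets of one cardinality. -/
noncomputable def koszulD (c : Finset σ → M) (T : Finset σ) : M :=
  ∑ i ∈ T, koszulSign i T • (X i : MvPolynomial σ R) • c (T.erase i)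

lemma koszulD_congr {c₁ c₂ : Finset σ → M} {T : Finset σ}
    (h : ∀ i ∈ T, c₁ (T.erase i) = c₂ (T.erase i)) : koszulD R c₁ T = koszulD R c₂ T :=
  sum_congr rfl fun i hi => by rw [h i hi]

lemma koszulD_sub (c₁ c₂ : Finset σ → M) (T : Finset σ) :
    koszulD R (c₁ - c₂) T = koszulD R c₁ T - koszulD R c₂ T := by
  simp only [koszulD, Pi.sub_apply, smul_sub, sum_sub_distrib]

lemma koszulD_smul {K : Type*} [Monoid K] [DistribMulAction K M]
    [SMulCommClass K (MvPolynomial σ R) M] (a : K) (c : Finset σ → M) (T : Finset σ) :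
    koszulD R (a • c) T = a • koszulD R c T := by
  simp only [koszulD, Pi.smul_apply, smul_sum, smul_comm a]

lemma map_koszulD (φ : M →ₗ[MvPolynomial σ R] N) (c : Finset σ → M) (T : Finset σ) :
    φ (koszulD R c T) = koszulD R (φ ∘ c) T := by
  simp [koszulD]

lemma koszulD_koszulD (c : Finset σ → M) (T : Finset σ) : koszulD R (koszulD R c) T = 0 := by
  set g : σ → σ → M := fun i j => (koszulSign i T * koszulSign j (T.erase i)) •
    (X i * X j : MvPolynomial σ R) • c ((T.erase i).erase j)
  have hexpand : koszulD R (koszulD R c) T = ∑ p ∈ T.offDiag, g p.1 p.2 := by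
    rw [sum_finset_product' _ T (fun i => T.erase i) fun p => by
      simp only [mem_offDiag, mem_erase, ne_comm (a := p.2)]; tauto]
    refine sum_congr rfl fun i _ => ?_
    simp only [koszulD, smul_sum]
    refine sum_congr rfl fun j _ => ?_
    rw [smul_comm (X i : MvPolynomial σ R) (koszulSign j _)]
    simp only [g, smul_smul]
  rw [hexpand]
  refine sum_involution (fun p _ => p.swap) (fun p hp => ?_) (fun p hp _ => ?_)
    (fun p hp => by
      obtain ⟨hi, hj, hij⟩ := mem_offDiag.1 hp
      exact mem_offDiag.2 ⟨hj, hi, hij.symm⟩) (fun p _ => p.swap_swap)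
  · obtain ⟨hi, hj, hij⟩ := mem_offDiag.1 hp
    simp only [g, Prod.fst_swap, Prod.snd_swap]
    rw [koszulSign_mul_koszulSign_erase hi hj hij, erase_right_comm, mul_comm (X p.2), neg_smul,
      add_neg_cancel]
  · exact fun h => (mem_offDiag.1 hp).2.2 (congrArg Prod.fst h).symm

lemma koszulD_singleton (c : Finset σ → M) (i : σ) :
    koszulD R c {i} = (X i : MvPolynomial σ R) • c ∅ := by
  rw [koszulD, sum_singleton, koszulSign_singleton, one_smul, erase_singleton]

lemma koszulD_eq_zero_of_card_eq_two {c : Finset σ → M}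
    (hc : ∀ i j, (X i : MvPolynomial σ R) • c {j} = (X j : MvPolynomial σ R) • c {i})
    {T : Finset σ} (hT : #T = 2) : koszulD R c T = 0 := by
  obtain ⟨i, j, hij, rfl⟩ := card_eq_two.1 hT
  have h₁ : ({i, j} : Finset σ).erase i = {j} := erase_insert (by simpa using hij)
  have h₂ : ({i, j} : Finset σ).erase j = {i} := by
    rw [erase_insert_of_ne hij, erase_singleton, insert_empty]
  have hsign := koszulSign_erase_mul_koszulSign_erase (mem_insert_self i {j})
    (mem_insert_of_mem (mem_singleton_self j)) hij
  have hsq := koszulSign_mul_self i {i, j}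
  rw [h₁, h₂, koszulSign_singleton, koszulSign_singleton, one_mul] at hsign
  have hsum : koszulSign i {i, j} + koszulSign j {i, j} = 0 := by
    linear_combination koszulSign i {i, j} * hsign - koszulSign j {i, j} * hsq
  rw [koszulD, sum_pair hij, h₁, h₂, hc j i, ← add_smul, hsum, zero_smul]

end KoszulDifferential

section BasisPDeriv

variable {σ R M ι : Type*} [CommSemiring R] [AddCommGroup M] [Module (MvPolynomial σ R) M]
  (b : Module.Basis ι (MvPolynomial σ R) M)

noncomputable def Module.Basis.pderiv (i : σ) : M →+ M :=
  b.repr.symm.toAddMonoidHom.comp <|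
    (Finsupp.mapRange.addMonoidHom (MvPolynomial.pderiv i).toAddMonoidHom).comp
      b.repr.toAddMonoidHom

lemma Module.Basis.repr_pderiv (i : σ) (x : M) (a : ι) :
    b.repr (b.pderiv i x) a = MvPolynomial.pderiv i (b.repr x a) := by
  simp [Module.Basis.pderiv]

lemma Module.Basis.pderiv_X_smul [DecidableEq σ] (i j : σ) (x : M) :
    b.pderiv i ((X j : MvPolynomial σ R) • x) =
      (if j = i then x else 0) + (X j : MvPolynomial σ R) • b.pderiv i x := by
  refine b.repr.injective (Finsupp.ext fun a => ?_)
  rcases eq_or_ne j i with rfl | h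
  · simp [b.repr_pderiv, pderiv_X, add_comm]
  · simp [b.repr_pderiv, pderiv_X, h]

lemma Module.Basis.sum_X_smul_pderiv [Fintype σ] {e : ℕ} {x : M}
    (hx : ∀ a, (b.repr x a).IsHomogeneous e) :
    ∑ i, (X i : MvPolynomial σ R) • b.pderiv i x = e • x := by
  refine b.repr.injective (Finsupp.ext fun a => ?_)
  simp [Finsupp.finsetSum_apply, b.repr_pderiv, (hx a).sum_X_mul_pderiv]

end BasisPDeriv

section KoszulHomotopy

variable {σ R M ι : Type*} [LinearOrder σ] [Fintype σ] [CommSemiring R] [AddCommGroup M]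
  [Module (MvPolynomial σ R) M] (b : Module.Basis ι (MvPolynomial σ R) M)

/-- Contraction with `∑ dxᵢ ⊗ ∂/∂xᵢ`. -/
noncomputable def koszulH (c : Finset σ → M) (T : Finset σ) : M :=
  ∑ i ∈ Tᶜ, koszulSign i (insert i T) • b.pderiv i (c (insert i T))

lemma koszulD_koszulH (c : Finset σ → M) (T : Finset σ) :
    koszulD R (koszulH b c) T =
      ∑ i ∈ T, (X i : MvPolynomial σ R) • b.pderiv i (c T) +
      ∑ i ∈ T, ∑ j ∈ Tᶜ, (koszulSign i T * koszulSign j ((insert j T).erase i)) •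
        (X i : MvPolynomial σ R) • b.pderiv j (c ((insert j T).erase i)) := by
  rw [← sum_add_distrib]
  refine sum_congr rfl fun i hi => ?_
  rw [koszulH, compl_erase, sum_insert (by simp [hi]), insert_erase hi, smul_add, smul_add,
    smul_comm (X i : MvPolynomial σ R) (koszulSign i T), smul_smul, koszulSign_mul_self, one_smul,
    smul_sum, smul_sum]
  congr 1
  refine sum_congr rfl fun j hj => ?_
  rw [erase_insert_of_ne (by rintro rfl; exact (mem_compl.1 hj) hi),
    smul_comm (X i : MvPolynomial σ R) (koszulSign j _), smul_smul]

lemma koszulH_koszulD (c : Finset σ → M) (T : Finset σ) :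
    koszulH b (koszulD R c) T =
      ∑ j ∈ Tᶜ, (c T + (X j : MvPolynomial σ R) • b.pderiv j (c T)) -
      ∑ i ∈ T, ∑ j ∈ Tᶜ, (koszulSign i T * koszulSign j ((insert j T).erase i)) •
        (X i : MvPolynomial σ R) • b.pderiv j (c ((insert j T).erase i)) := by
  rw [sum_comm, ← sum_sub_distrib]
  refine sum_congr rfl fun j hj => ?_
  have hjT : j ∉ T := mem_compl.1 hj
  rw [koszulD, sum_insert hjT, erase_insert hjT, map_add, map_zsmul, b.pderiv_X_smul, if_pos rfl,
    smul_add, smul_smul, koszulSign_mul_self, one_smul, map_sum, smul_sum, sub_eq_add_neg,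
    ← sum_neg_distrib]
  congr 1
  refine sum_congr rfl fun i hi => ?_
  have hij : i ≠ j := by rintro rfl; exact hjT hi
  have hsign := koszulSign_erase_mul_koszulSign_erase (mem_insert_of_mem hi)
    (mem_insert_self j T) hij
  rw [erase_insert hjT] at hsign
  rw [map_zsmul, b.pderiv_X_smul, if_neg hij, zero_add, smul_smul, ← neg_smul, hsign, neg_neg,
    mul_comm]

/-- The summand `e` comes from Euler's identity, the summand `#Tᶜ` from the terms `∂ⱼ (xⱼ • c T)`
with `j ∉ T`. -/
lemma koszulD_koszulH_add_koszulH_koszulD {e : ℕ} {c : Finset σ → M} {T : Finset σ}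
    (hc : ∀ a, (b.repr (c T) a).IsHomogeneous e) :
    koszulD R (koszulH b c) T + koszulH b (koszulD R c) T = (e + #Tᶜ) • c T := by
  rw [koszulD_koszulH, koszulH_koszulD, sum_add_distrib, sum_const, add_nsmul,
    ← b.sum_X_smul_pderiv hc, ← sum_add_sum_compl T]
  abel

end KoszulHomotopy

section FreeGraded

lemma MvPolynomial.sum_range_homogeneousComponent {σ R : Type*} [CommSemiring R]
    {p : MvPolynomial σ R} {D : ℕ} (h : p.totalDegree ≤ D) :
    ∑ d ∈ range (D + 1), homogeneousComponent d p = p := by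
  rw [← sum_subset (range_subset_range.2 (Nat.succ_le_succ h))
    fun d _ hd => homogeneousComponent_eq_zero d p (by simpa using hd)]
  exact sum_homogeneousComponent p

lemma MvPolynomial.isHomogeneous_of_forall_ne {σ R : Type*} [CommSemiring R]
    {p : MvPolynomial σ R} {e : ℕ} (h : ∀ d ≠ e, homogeneousComponent d p = 0) :
    p.IsHomogeneous e := by
  rw [← sum_homogeneousComponent p, sum_eq_single e (fun d _ hd => h d hd)
    fun he => homogeneousComponent_eq_zero e p (by simpa using he)]
  exact homogeneousComponent_isHomogeneous e p

variable {n : ℕ} {P : GrMod (polyGrading n)} {ι : Type} {g : ℤ}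

lemma GrMod.mem_gr_of_repr_isHomogeneous {b : Module.Basis ι (PolyRing n) P.M}
    (hb : ∀ j, b j ∈ P.gr g) {e : ℕ} {x : P.M} (hx : ∀ a, (b.repr x a).IsHomogeneous e) :
    x ∈ P.gr (g + e) := by
  rw [← b.linearCombination_repr x, Finsupp.linearCombination_apply]
  exact Submodule.finsuppSum_mem _ _ _ _ fun a _ => P.smul_mem' e g _ (hx a) _ (hb a)

/-- Splitting the coordinates of `x` into homogeneous components writes `x` as a sum of
elements of the degrees `g + d`; uniqueness of the decomposition of `x ∈ P.gr (g + e)` kills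
every component with `d ≠ e`. -/
lemma GrMod.repr_isHomogeneous_of_mem_gr {b : Module.Basis ι (PolyRing n) P.M}
    (hb : ∀ j, b j ∈ P.gr g) {e : ℕ} {x : P.M} (hx : x ∈ P.gr (g + e)) (a : ι) :
    (b.repr x a).IsHomogeneous e := by
  set F := b.repr x
  set Φ : ℕ → P.M := fun d =>
    b.repr.symm (Finsupp.mapRange (homogeneousComponent d) (map_zero _) F)
  have hΦ : ∀ d a', b.repr (Φ d) a' = homogeneousComponent d (F a') := by simp [Φ]
  have hΦmem : ∀ d : ℕ, Φ d ∈ P.gr (g + d) := fun d =>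
    GrMod.mem_gr_of_repr_isHomogeneous hb fun a' => by
      rw [hΦ]; exact homogeneousComponent_isHomogeneous d _
  refine isHomogeneous_of_forall_ne fun d hd => ?_
  set D := d + F.support.sup fun a' => (F a').totalDegree
  have hsum : ∑ d' ∈ range (D + 1), Φ d' = x := by
    refine b.repr.injective (Finsupp.ext fun a' => ?_)
    simp only [map_sum, Finsupp.finsetSum_apply, hΦ]
    refine sum_range_homogeneousComponent ?_
    by_cases ha' : a' ∈ F.support
    · exact (le_sup (f := fun a' => (F a').totalDegree) ha').trans (Nat.le_add_left _ _)
    · simp [Finsupp.notMem_support_iff.1 ha']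
  have hΦd : Φ d = 0 := by
    rw [← P.proj_of_mem_ne hx (by omega : g + (e : ℤ) ≠ g + d), ← hsum, map_sum,
      sum_eq_single d (fun d' _ hd' => P.proj_of_mem_ne (hΦmem d') (by omega))
        (fun h => absurd (mem_range.2 (by omega)) h), P.proj_of_mem (hΦmem d)]
  rw [← hΦ, hΦd, map_zero, Finsupp.zero_apply]

end FreeGraded

section KoszulGraded

variable {n : ℕ}

lemma koszulD_mem_gr {M : GrMod (polyGrading n)} {c : Finset (Fin (n+1)) → M.M}
    {T : Finset (Fin (n+1))} {d : ℤ} (h : ∀ i ∈ T, c (T.erase i) ∈ M.gr d) :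
    koszulD ℂ c T ∈ M.gr (d + 1) :=
  Submodule.sum_mem _ fun i hi => zsmul_mem (by
    simpa using M.smul_mem' 1 d _ (X_mem_polyGrading i) _ (h i hi)) _

variable {P : GrMod (polyGrading n)} {ι : Type} {g : ℤ}

lemma Module.Basis.pderiv_mem_gr {b : Module.Basis ι (PolyRing n) P.M}
    (hb : ∀ j, b j ∈ P.gr g) {e : ℕ} {x : P.M} (hx : x ∈ P.gr (g + e + 1)) (i : Fin (n+1)) :
    b.pderiv i x ∈ P.gr (g + e) := by
  refine GrMod.mem_gr_of_repr_isHomogeneous hb fun a => ?_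
  rw [b.repr_pderiv]
  have hx' : x ∈ P.gr (g + (e + 1 : ℕ)) := by push_cast; rwa [← add_assoc]
  exact (GrMod.repr_isHomogeneous_of_mem_gr hb hx' a).pderiv

/-- On cocycles the homotopy formula reads `d (H c) = (e + 1 + (n - k)) • c`. -/
theorem exists_koszulD_eq_of_isFreeGenInDegree (hP : IsFreeGenInDegree P g) (k e : ℕ)
    (c : Finset (Fin (n+1)) → P.M) (hc : ∀ T, #T = k + 1 → c T ∈ P.gr (g + e + 1))
    (hcoc : ∀ T, #T = k + 2 → koszulD ℂ c T = 0) :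
    ∃ v : Finset (Fin (n+1)) → P.M,
      (∀ T, #T = k → v T ∈ P.gr (g + e)) ∧ ∀ T, #T = k + 1 → c T = koszulD ℂ v T := by
  obtain ⟨ι, b, hb⟩ := hP
  set N : ℕ := e + 1 + (n - k)
  refine ⟨(N : ℂ)⁻¹ • koszulH b c, fun T hT => ?_, fun T hT => ?_⟩
  · refine Submodule.smul_mem _ _ (Submodule.sum_mem _ fun i hi => zsmul_mem ?_ _)
    refine b.pderiv_mem_gr hb (hc _ ?_) i
    rw [card_insert_of_notMem (mem_compl.1 hi), hT]
  · have hHD : koszulH b (koszulD ℂ c) T = 0 := sum_eq_zero fun i hi => by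
      rw [hcoc _ (by rw [card_insert_of_notMem (mem_compl.1 hi), hT]), map_zero, smul_zero]
    have hcard : #Tᶜ = n - k := by simp [card_compl, hT]
    have hom := koszulD_koszulH_add_koszulH_koszulD b (e := e + 1) (T := T)
      (GrMod.repr_isHomogeneous_of_mem_gr hb (by push_cast; rw [← add_assoc]; exact hc T hT))
    rw [hHD, add_zero, hcard] at hom
    rw [koszulD_smul, hom, ← Nat.cast_smul_eq_nsmul ℂ, smul_smul,
      inv_mul_cancel₀ (Nat.cast_ne_zero.2 (by omega)), one_smul]

end KoszulGraded

section LinearResolution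

variable {n : ℕ}

/-- Vanishing of the Koszul cohomology of `K ⊆ X` in cohomological degree `k + 1` and internal
degree `d + 1`. -/
def KoszulAcyclicAt (X : GrMod (polyGrading n)) (K : Submodule (PolyRing n) X.M) (k : ℕ)
    (d : ℤ) : Prop :=
  ∀ c : Finset (Fin (n+1)) → X.M,
    (∀ T, #T = k + 1 → c T ∈ X.gr (d + 1) ∧ c T ∈ K) →
    (∀ T, #T = k + 2 → koszulD ℂ c T = 0) →
    ∃ v : Finset (Fin (n+1)) → X.M,
      (∀ T, #T = k → v T ∈ X.gr d ∧ v T ∈ K) ∧ ∀ T, #T = k + 1 → c T = koszulD ℂ v T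

lemma koszulAcyclicAt_of_card_lt {X : GrMod (polyGrading n)} (K : Submodule (PolyRing n) X.M)
    {k : ℕ} (hk : n < k) (d : ℤ) : KoszulAcyclicAt X K k d := fun _ _ _ =>
  ⟨0, fun _ _ => ⟨zero_mem _, zero_mem _⟩, fun T hT => absurd (card_le_univ T) (by simp; omega)⟩

/-- Lift the cocycle along `δ`, correct the lift by the acyclicity one step up so that it
becomes a cocycle of the free module `F`, contract it there, and push the result back. -/
theorem KoszulAcyclicAt.range_of_ker {F Q : GrMod (polyGrading n)} (δ : GrHom F Q) {g : ℤ}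
    (hF : IsFreeGenInDegree F g) {k m : ℕ}
    (h : KoszulAcyclicAt F (LinearMap.ker δ.toFun) (k + 1) (g + m + 1)) :
    KoszulAcyclicAt Q (LinearMap.range δ.toFun) k (g + m) := by
  intro c hc hcoc
  choose! y hy_mem hy using fun T (hT : #T = k + 1) =>
    δ.exists_mem_gr_of_mem_range (hc T hT).1 (hc T hT).2
  have hy_erase : ∀ T : Finset (Fin (n+1)), #T = k + 2 → ∀ i ∈ T, #(T.erase i) = k + 1 :=
    fun T hT i hi => by rw [card_erase_of_mem hi, hT]; rfl
  obtain ⟨u, hu, hyu⟩ := h (koszulD ℂ y) (fun T hT => ⟨koszulD_mem_gr fun i hi =>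
      hy_mem _ (hy_erase T hT i hi), by
    rw [LinearMap.mem_ker, map_koszulD, koszulD_congr (c₂ := c) fun i hi =>
      hy _ (hy_erase T hT i hi), hcoc T hT]⟩) fun T _ => koszulD_koszulD _ _
  obtain ⟨z, hz, hwz⟩ := exists_koszulD_eq_of_isFreeGenInDegree hF k m (y - u)
    (fun T hT => sub_mem (hy_mem T hT) (hu T hT).1)
    fun T hT => by rw [koszulD_sub, hyu T hT, sub_self]
  refine ⟨δ.toFun ∘ z, fun T hT => ⟨δ.map_gr _ _ (hz T hT), LinearMap.mem_range_self _ _⟩,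
    fun T hT => ?_⟩
  rw [← map_koszulD, ← hwz T hT, Pi.sub_apply, map_sub, hy T hT, LinearMap.mem_ker.1 (hu T hT).2,
    sub_zero]

theorem koszulAcyclicAt_range_of_linearResolution (P : ℕ → GrMod (polyGrading n))
    (d : ∀ k, GrHom (P (k+1)) (P k)) (hfree : ∀ k, IsFreeGenInDegree (P k) (k : ℤ))
    (hex : ∀ k, LinearMap.range (d (k+1)).toFun = LinearMap.ker (d k).toFun) (m j : ℕ) :
    KoszulAcyclicAt (P j) (LinearMap.range (d j).toFun) (j + 1) (((j + 1 : ℕ) : ℤ) + m) := by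
  by_cases hj : n ≤ j
  · exact koszulAcyclicAt_of_card_lt _ (by omega) _
  refine KoszulAcyclicAt.range_of_ker (d j) (hfree (j + 1)) ?_
  have ih := koszulAcyclicAt_range_of_linearResolution P d hfree hex m (j + 1)
  rwa [hex j, show ((j + 1 + 1 : ℕ) : ℤ) + m = ((j + 1 : ℕ) : ℤ) + m + 1 by push_cast; ring] at ih
termination_by n - j

theorem IsLinearModule.koszulAcyclicAt {A : GrMod (polyGrading n)} (hA : IsLinearModule A)
    (m : ℕ) : KoszulAcyclicAt A ⊤ 0 m := by
  obtain ⟨P, d, p, hfree, hsurj, hex₀, hex⟩ := hA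
  have h := koszulAcyclicAt_range_of_linearResolution P d hfree hex m 0
  rw [hex₀, show ((0 + 1 : ℕ) : ℤ) + m = ((0 : ℕ) : ℤ) + m + 1 by push_cast; ring] at h
  simpa [LinearMap.range_eq_top.2 hsurj] using KoszulAcyclicAt.range_of_ker p (hfree 0) h

end LinearResolution

section Main

variable {n : ℕ}

/-- For a lift `b₀ ∈ B_m` of `c`, the elements `xᵢ b₀` lie in `A_{m+1}` and form a Koszul
1-cocycle of `A`; a primitive `a₀ ∈ A_m` of it corrects `b₀` to a lift killed by all `xᵢ`. -/
theorem exists_lift_X_smul_eq_zero {A B C : GrMod (polyGrading n)} (hA : IsLinearModule A)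
    {m : ℕ} (hC : IsSemisimpleInDegree C m) {f : GrHom A B} {g : GrHom B C} (hses : IsSES f g)
    (c : C.M) : ∃ b ∈ B.gr m, g.toFun b = c ∧ ∀ i, (X i : PolyRing n) • b = 0 := by
  obtain ⟨b₀, hb₀, rfl⟩ := g.exists_mem_gr_of_mem_range (C.mem_gr_of_forall_ne_eq_bot hC.1 c)
    (LinearMap.range_eq_top.2 hses.surj ▸ Submodule.mem_top)
  have hXb₀ : ∀ i, ∃ a ∈ A.gr (m + 1), f.toFun a = (X i : PolyRing n) • b₀ := fun i =>
    f.exists_mem_gr_of_mem_range (by simpa using B.smul_mem' 1 m _ (X_mem_polyGrading i) b₀ hb₀)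
      (by rw [hses.exact, LinearMap.mem_ker, map_smul, hC.X_smul])
  choose a ha hfa using hXb₀
  obtain ⟨v, hv, hav⟩ := hA.koszulAcyclicAt m (fun T => ∑ i ∈ T, a i)
    (fun _ _ => ⟨Submodule.sum_mem _ fun i _ => ha i, Submodule.mem_top⟩)
    fun _ hT => koszulD_eq_zero_of_card_eq_two (fun i j => hses.inj (by
      simp only [sum_singleton, map_smul, hfa, smul_smul, mul_comm])) hT
  refine ⟨b₀ - f.toFun (v ∅), sub_mem hb₀ (f.map_gr _ _ (hv ∅ card_empty).1), by
    rw [map_sub, hses.map_map_eq_zero, sub_zero], fun i => ?_⟩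
  have hai : a i = (X i : PolyRing n) • v ∅ := by
    simpa [koszulD_singleton] using hav {i} (card_singleton i)
  rw [smul_sub, ← map_smul, ← hai, hfa, sub_self]

end Main

theorem stmt5_general {n : ℕ} (A B C : GrMod (polyGrading n))
    (hA : IsLinearModule A) (m : ℤ) (hm : 0 ≤ m) (hC : IsSemisimpleInDegree C m)
    (f : GrHom A B) (g : GrHom B C) (hses : IsSES f g) :
    Splits f g := by
  lift m to ℕ using hm
  obtain ⟨s, hs⟩ := exists_section_of_forall_lift hC g (exists_lift_X_smul_eq_zero hA hC hses)
  exact hses.splits_of_section s hs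

/-- Lemma 1.2: let `0 → A → B → C → 0` be a short exact sequence of finitely
generated graded modules over `S = ℂ[x₀,…,xₙ]` where `A` is a linear (Koszul)
module and `C` is semisimple concentrated in a single degree `m ≥ 0`.  Then the
sequence splits. -/
theorem stmt5 {n : ℕ} (A B C : GrMod (polyGrading n))
    [Module.Finite (PolyRing n) A.M] [Module.Finite (PolyRing n) B.M]
    [Module.Finite (PolyRing n) C.M]
    (hA : IsLinearModule A) (m : ℤ) (hm : 0 ≤ m) (hC : IsSemisimpleInDegree C m)
    (f : GrHom A B) (g : GrHom B C) (hses : IsSES f g) :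
    Splits f g :=
  stmt5_general A B C hA m hm hC f g hses
end

section
/- Let S = ℂ[x₀,…,xₙ], C a linear graded S-module, and i > 0 an integer. If Ext¹_S(C_{≥i}, C)₀ = 0, then Ext¹_S(C_{≥i}, C_{≥i})₀ = 0. -/
/-!
Let `0 → T → Y → T → 0` be an extension, where `T = C_{≥i}`. Since `T` lives in degrees `≥ i`,
so does `Y`. Pushing the extension out along the inclusion `T → C` gives an extension of `T`
by `C`, which splits by hypothesis; the splitting yields a graded map `r : Y → C` extending the
inclusion. As `Y` lives in degrees `≥ i`, `r` lands in `C_{≥i} = T`, and is a retraction of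
`T → Y`.
-/

namespace DirectSum.IsInternal

variable {R M N ι : Type*} [Ring R] [AddCommGroup M] [Module R M] [AddCommGroup N] [Module R N]
  [DecidableEq ι] {p : ι → Submodule R M}

open Submodule

theorem prod {q : ι → Submodule R N} (hp : IsInternal p) (hq : IsInternal q) :
    IsInternal fun k => (p k).prod (q k) := by
  rw [isInternal_submodule_iff_iSupIndep_and_iSup_eq_top] at *
  refine ⟨fun k => ?_, eq_top_iff.2 ?_⟩
  · have hle : ⨆ (j) (_ : j ≠ k), (p j).prod (q j) ≤
        (⨆ (j) (_ : j ≠ k), p j).prod (⨆ (j) (_ : j ≠ k), q j) :=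
      iSup₂_le fun j hj => prod_mono (le_iSup₂ (f := fun j _ => p j) j hj)
        (le_iSup₂ (f := fun j _ => q j) j hj)
    refine Disjoint.mono_right hle ?_
    rw [disjoint_iff, prod_inf_prod, (hp.1 k).eq_bot, (hq.1 k).eq_bot, prod_bot]
  · rw [← prod_top, ← hp.2, ← hq.2, prod_le_iff, Submodule.map_iSup, Submodule.map_iSup]
    exact ⟨iSup_mono fun j => ((prod_le_iff _ _ _).1 le_rfl).1,
      iSup_mono fun j => ((prod_le_iff _ _ _).1 le_rfl).2⟩

theorem map_of_ker_eq_iSup (hp : IsInternal p) (π : M →ₗ[R] N) (hπ : Function.Surjective π)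
    (hker : LinearMap.ker π = ⨆ k, LinearMap.ker π ⊓ p k) :
    IsInternal fun k => (p k).map π := by
  rw [isInternal_submodule_iff_iSupIndep_and_iSup_eq_top]
  refine ⟨fun k => ?_, by rw [← Submodule.map_iSup, hp.submodule_iSup_eq_top, Submodule.map_top,
    LinearMap.range_eq_top.2 hπ]⟩
  simp_rw [disjoint_def, ← Submodule.map_iSup]
  rintro _ ⟨m, hm, rfl⟩ ⟨m', hm', hmm'⟩
  have hdiff : m' - m ∈ LinearMap.ker π := by simp [hmm']
  rw [hker, iSup_split_single _ k, mem_sup] at hdiff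
  obtain ⟨a, ha, b, hb, hab⟩ := hdiff
  have hb' : b ∈ ⨆ (j) (_ : j ≠ k), p j :=
    (iSup₂_mono fun j _ => inf_le_right : (⨆ (j) (_ : j ≠ k), LinearMap.ker π ⊓ p j) ≤ _) hb
  -- `m + a = m' - b` lies both in `p k` and in `⨆ j ≠ k, p j`
  have hmid : m + a = m' - b := by rw [eq_sub_of_add_eq' hab]; abel
  have hzero : m + a = 0 :=
    (hp.submodule_iSupIndep k).eq_bot.le ⟨add_mem hm ha.2, hmid ▸ sub_mem hm' hb'⟩
  rw [eq_neg_of_add_eq_zero_left hzero, map_neg, ha.1, neg_zero]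

theorem range_eq_iSup_inf {q : ι → Submodule R N} (hp : IsInternal p) (φ : M →ₗ[R] N)
    (hφ : ∀ k, (p k).map φ ≤ q k) :
    LinearMap.range φ = ⨆ k, LinearMap.range φ ⊓ q k := by
  refine le_antisymm ?_ (iSup_le fun k => inf_le_left)
  calc LinearMap.range φ = ⨆ k, (p k).map φ := by
        rw [LinearMap.range_eq_map, ← hp.submodule_iSup_eq_top, Submodule.map_iSup]
    _ ≤ _ := iSup_mono fun k => le_inf LinearMap.map_le_range (hφ k)

end DirectSum.IsInternal

section GradedModules

variable {A : Type} [Ring A] [Algebra ℂ A] {𝒜 : ℕ → Submodule ℂ A}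

namespace GrHom

variable {X Y : GrMod 𝒜}

theorem map_gr_le (φ : GrHom X Y) (k : ℤ) :
    (X.gr k).map (φ.toFun.restrictScalars ℂ) ≤ Y.gr k := by
  rintro _ ⟨x, hx, rfl⟩
  exact φ.map_gr k x hx

theorem eq_zero_of_mem_gr (φ : GrHom X Y) {k : ℤ} (hk : X.gr k = ⊥) {x : X.M}
    (hx : φ.toFun x ∈ Y.gr k) : φ.toFun x = 0 := by
  have hrange : LinearMap.range (φ.toFun.restrictScalars ℂ) ≤ ⨆ (j) (_ : j ≠ k), Y.gr j := by
    rw [LinearMap.range_eq_map, ← X.decomp.submodule_iSup_eq_top, Submodule.map_iSup,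
      iSup_split_single _ k, hk, Submodule.map_bot, bot_sup_eq]
    exact iSup₂_mono fun j _ => φ.map_gr_le j
  exact Submodule.disjoint_def.1 (Y.decomp.submodule_iSupIndep k) _ hx (hrange ⟨x, rfl⟩)

end GrHom

theorem IsSES.gr_eq_bot {X Y Z : GrMod 𝒜} {f : GrHom X Y} {g : GrHom Y Z} (h : IsSES f g)
    {k : ℤ} (hX : X.gr k = ⊥) (hZ : Z.gr k = ⊥) : Y.gr k = ⊥ := by
  refine (Submodule.eq_bot_iff _).2 fun y hy => ?_
  have hgy : g.toFun y = 0 := by simpa [hZ] using g.map_gr k y hy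
  obtain ⟨x, rfl⟩ : y ∈ LinearMap.range f.toFun := h.exact ▸ hgy
  exact f.eq_zero_of_mem_gr hX hy

namespace GrMod

abbrev prod (X Y : GrMod 𝒜) : GrMod 𝒜 where
  M := X.M × Y.M
  gr k := (X.gr k).prod (Y.gr k)
  decomp := X.decomp.prod Y.decomp
  smul_mem' d k s hs _ hm := ⟨X.smul_mem' d k s hs _ hm.1, Y.smul_mem' d k s hs _ hm.2⟩

variable {X W : GrMod 𝒜}

def cokernel (ψ : GrHom X W) : GrMod 𝒜 where
  M := W.M ⧸ LinearMap.range ψ.toFun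
  gr k := (W.gr k).map ((LinearMap.range ψ.toFun).mkQ.restrictScalars ℂ)
  decomp := by
    set π := (LinearMap.range ψ.toFun).mkQ.restrictScalars ℂ
    have hπ : Function.Surjective π := by
      intro x
      obtain ⟨m, rfl⟩ := Submodule.mkQ_surjective _ x
      exact ⟨m, rfl⟩
    have hker : LinearMap.ker π = LinearMap.range (ψ.toFun.restrictScalars ℂ) := by
      rw [LinearMap.ker_restrictScalars, Submodule.ker_mkQ, LinearMap.range_restrictScalars]
    exact W.decomp.map_of_ker_eq_iSup π hπ (hker ▸ X.decomp.range_eq_iSup_inf _ ψ.map_gr_le)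
  smul_mem' d k s hs := by
    rintro _ ⟨m, hm, rfl⟩
    exact ⟨s • m, W.smul_mem' d k s hs m hm, (Submodule.mkQ _).map_smul s m⟩

variable (ψ : GrHom X W)

def cokernel.π : GrHom W (cokernel ψ) :=
  ⟨(LinearMap.range ψ.toFun).mkQ, fun _ m hm => ⟨m, hm, rfl⟩⟩

def cokernel.desc {Z : GrMod 𝒜} (g : GrHom W Z)
    (hg : LinearMap.range ψ.toFun ≤ LinearMap.ker g.toFun) : GrHom (cokernel ψ) Z :=
  ⟨(LinearMap.range ψ.toFun).liftQ g.toFun hg, by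
    rintro k _ ⟨m, hm, rfl⟩
    exact g.map_gr k m hm⟩

variable {Y Z X' : GrMod 𝒜} (f : GrHom X Y) (φ : GrHom X X')

def pushoutRel : GrHom X (X'.prod Y) :=
  ⟨φ.toFun.prod (-f.toFun), fun k x hx => ⟨φ.map_gr k x hx, neg_mem (f.map_gr k x hx)⟩⟩

def pushout : GrMod 𝒜 := cokernel (pushoutRel f φ)

def pushout.inl : GrHom X' (pushout f φ) :=
  (cokernel.π _).comp ⟨LinearMap.inl A X'.M Y.M, fun k _ hx => ⟨hx, zero_mem (Y.gr k)⟩⟩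

def pushout.inr : GrHom Y (pushout f φ) :=
  (cokernel.π _).comp ⟨LinearMap.inr A X'.M Y.M, fun k _ hy => ⟨zero_mem (X'.gr k), hy⟩⟩

theorem pushout.inr_apply_map (x : X.M) :
    (pushout.inr f φ).toFun (f.toFun x) = (pushout.inl f φ).toFun (φ.toFun x) :=
  (Submodule.Quotient.eq _).2 ⟨-x, by simp [pushoutRel]⟩

variable {f} in
def pushout.desc {g : GrHom Y Z} (h : IsSES f g) : GrHom (pushout f φ) Z :=
  cokernel.desc _ ⟨g.toFun ∘ₗ LinearMap.snd A X'.M Y.M, fun k _ hx => g.map_gr k _ hx.2⟩ <| by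
    rintro _ ⟨x, rfl⟩
    have hgf : g.toFun (f.toFun x) = 0 := h.exact.le ⟨x, rfl⟩
    simp [pushoutRel, hgf]

theorem isSES_pushout {g : GrHom Y Z} (h : IsSES f g) :
    IsSES (pushout.inl f φ) (pushout.desc φ h) where
  inj := by
    refine (injective_iff_map_eq_zero _).2 fun x' hx' => ?_
    obtain ⟨x, hx⟩ := (Submodule.Quotient.mk_eq_zero _).1 hx'
    have hφx : φ.toFun x = x' := congrArg Prod.fst hx
    have hfx : f.toFun x = 0 := neg_eq_zero.1 (congrArg Prod.snd hx)
    rw [← hφx, h.inj (hfx.trans (map_zero _).symm), map_zero]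
  surj z := by
    obtain ⟨y, rfl⟩ := h.surj z
    exact ⟨(pushout.inr f φ).toFun y, rfl⟩
  exact := by
    refine le_antisymm ?_ fun q hq => ?_
    · rintro _ ⟨x', rfl⟩
      exact map_zero g.toFun
    · obtain ⟨⟨x', y⟩, rfl⟩ := Submodule.mkQ_surjective _ q
      obtain ⟨x, rfl⟩ : y ∈ LinearMap.range f.toFun := h.exact ▸ hq
      exact ⟨x' + φ.toFun x, (Submodule.Quotient.eq _).2 ⟨x, by simp [pushoutRel]⟩⟩

end GrMod

theorem Ext1Zero.exists_comp_eq {X Y Z X' : GrMod 𝒜} (hZ : Ext1Zero Z X') {f : GrHom X Y}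
    {g : GrHom Y Z} (h : IsSES f g) (φ : GrHom X X') : ∃ r : GrHom Y X', r.comp f = φ := by
  obtain ⟨r, hr⟩ := hZ _ _ _ (GrMod.isSES_pushout f φ h)
  refine ⟨r.comp (GrMod.pushout.inr f φ), GrHom.ext (LinearMap.ext fun x => ?_)⟩
  show r.toFun ((GrMod.pushout.inr f φ).toFun (f.toFun x)) = φ.toFun x
  rw [GrMod.pushout.inr_apply_map]
  exact LinearMap.congr_fun (congrArg GrHom.toFun hr) (φ.toFun x)

namespace IsTruncation

variable {C T : GrMod 𝒜} {i : ℤ} {ι : GrHom T C}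

theorem mem_gr_of_map_mem (hT : IsTruncation C T i ι) {t : T.M} {k : ℤ}
    (ht : ι.toFun t ∈ C.gr k) : t ∈ T.gr k := by
  rcases lt_or_ge k i with hk | hk
  · rw [hT.inj ((ι.eq_zero_of_mem_gr (hT.low k hk) ht).trans (map_zero _).symm)]
    exact zero_mem _
  · obtain ⟨t', ht', heq⟩ := hT.onto k hk _ ht
    exact hT.inj heq ▸ ht'

theorem exists_lift (hT : IsTruncation C T i ι) {Y : GrMod 𝒜} (hY : ∀ k < i, Y.gr k = ⊥)
    (r : GrHom Y C) : ∃ s : GrHom Y T, ι.comp s = r := by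
  have hr : ∀ y, r.toFun y ∈ LinearMap.range ι.toFun := by
    suffices ⨆ k, Y.gr k ≤
        ((LinearMap.range ι.toFun).restrictScalars ℂ).comap (r.toFun.restrictScalars ℂ) by
      rw [Y.decomp.submodule_iSup_eq_top] at this
      exact fun y => this trivial
    refine iSup_le fun k => ?_
    rcases lt_or_ge k i with hk | hk
    · simp [hY k hk]
    · intro y hy
      obtain ⟨t, -, ht⟩ := hT.onto k hk _ (r.map_gr k y hy)
      exact ⟨t, ht⟩
  let s : Y.M →ₗ[A] T.M :=
    (LinearEquiv.ofInjective ι.toFun hT.inj).symm.toLinearMap ∘ₗ r.toFun.codRestrict _ hr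
  have hs : ∀ y, ι.toFun (s y) = r.toFun y := fun y =>
    LinearEquiv.ofInjective_symm_apply (h := hT.inj) ι.toFun _
  exact ⟨⟨s, fun k y hy => hT.mem_gr_of_map_mem (hs y ▸ r.map_gr k y hy)⟩,
    GrHom.ext (LinearMap.ext hs)⟩

theorem ext1Zero (hT : IsTruncation C T i ι) (hC : Ext1Zero T C) : Ext1Zero T T := by
  intro Y f g hfg
  have hY : ∀ k < i, Y.gr k = ⊥ := fun k hk => hfg.gr_eq_bot (hT.low k hk) (hT.low k hk)
  obtain ⟨r, hr⟩ := hC.exists_comp_eq hfg ι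
  obtain ⟨s, hs⟩ := hT.exists_lift hY r
  refine ⟨s, GrHom.ext (LinearMap.ext fun t => hT.inj ?_)⟩
  calc ι.toFun (s.toFun (f.toFun t)) = r.toFun (f.toFun t) :=
        LinearMap.congr_fun (congrArg GrHom.toFun hs) _
    _ = ι.toFun t := LinearMap.congr_fun (congrArg GrHom.toFun hr) t

end IsTruncation

end GradedModules

theorem stmt7_general {n : ℕ} (C : GrMod (polyGrading n)) (i : ℤ)
    (T : GrMod (polyGrading n)) (ι : GrHom T C) (hT : IsTruncation C T i ι)
    (hvanish : Ext1Zero T C) :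
    Ext1Zero T T :=
  hT.ext1Zero hvanish

/-- Lemma 1.3: let `C` be a linear graded module over `S = ℂ[x₀,…,xₙ]`, let
`i > 0`, and let `T = C_{≥i}` be the truncation of `C` (realized by the
inclusion `ι : T → C`).  If `Ext¹(C_{≥i}, C)₀ = 0` (every extension of `T` by
`C` splits) then `Ext¹(C_{≥i}, C_{≥i})₀ = 0` (every extension of `T` by `T`
splits). -/
theorem stmt7 {n : ℕ} (C : GrMod (polyGrading n)) (hC : IsLinearModule C)
    (i : ℤ) (hi : 0 < i)
    (T : GrMod (polyGrading n)) (ι : GrHom T C) (hT : IsTruncation C T i ι)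
    (hvanish : Ext1Zero T C) :
    Ext1Zero T T :=
  stmt7_general C i T ι hT hvanish
end
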